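/- arXiv:2210.01454 — 5 statements merged into one kernel-verified Lean document; each statement's English description precedes it below -/
import Mathlib

section
/- Let c1, c2 > 0, δ2 ∈ (0,1), μ1 > 0, and let h2j ≥ 0, h3j ≥ 0 be real numbers. Define τ1 = (-c1·(μ1 + c1) + √(c1²·(μ1 + c1)² + 2·μ1·(1-δ2)·c1²·c2)) / ((1-δ2)·c1²·c2). Then for every τ ∈ [0, τ1], ((1-δ2)·c1·c2/2)·(-c1·h2j + c2·h3j)·τ² + ((μ1 + c1 + (1-δ2)·c2)·(-c1·h2j + c2·h3j) + (1-δ2)·c1·c2·h2j)·τ + μ1·h2j + δ2·c2·h3j ≥ h2j·(-((1-δ2)·c1²·c2/2)·τ² - c1·(μ1 + c1)·τ + μ1) ≥ 0. -/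
/-- Uniform lower bound on the upper-margin quadratic: for `τ ∈ [0, τ1]` the explicit
quadratic expression for `m1(t_j + τ)` is bounded below by `h2j` times a quadratic in `τ`
whose largest root is `τ1`, hence is nonnegative. -/
theorem stmt_5 (c1 c2 δ2 μ1 h2j h3j : ℝ) (hc1 : 0 < c1) (hc2 : 0 < c2)
    (hδ2 : δ2 ∈ Set.Ioo (0:ℝ) 1) (hμ1 : 0 < μ1) (hh2j : 0 ≤ h2j) (hh3j : 0 ≤ h3j)
    (τ1 : ℝ)
    (hτ1 : τ1 = (-(c1 * (μ1 + c1)) +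
        Real.sqrt (c1 ^ 2 * (μ1 + c1) ^ 2 + 2 * μ1 * (1 - δ2) * c1 ^ 2 * c2)) /
        ((1 - δ2) * c1 ^ 2 * c2)) :
    ∀ τ ∈ Set.Icc (0:ℝ) τ1,
      ((1 - δ2) * c1 * c2 / 2) * (-c1 * h2j + c2 * h3j) * τ ^ 2
          + ((μ1 + c1 + (1 - δ2) * c2) * (-c1 * h2j + c2 * h3j)
              + (1 - δ2) * c1 * c2 * h2j) * τ
          + μ1 * h2j + δ2 * c2 * h3j
        ≥ h2j * (-((1 - δ2) * c1 ^ 2 * c2 / 2) * τ ^ 2 - c1 * (μ1 + c1) * τ + μ1)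
      ∧ h2j * (-((1 - δ2) * c1 ^ 2 * c2 / 2) * τ ^ 2 - c1 * (μ1 + c1) * τ + μ1) ≥ 0 := by
  obtain ⟨hδ0, hδ1⟩ := hδ2
  have h1δ : 0 < 1 - δ2 := by linarith
  intro τ hτ
  obtain ⟨hτ0, hττ1⟩ := hτ
  set s := Real.sqrt (c1 ^ 2 * (μ1 + c1) ^ 2 + 2 * μ1 * (1 - δ2) * c1 ^ 2 * c2) with hs
  have hs0 : 0 ≤ s := Real.sqrt_nonneg _
  have hssq : s ^ 2 = c1 ^ 2 * (μ1 + c1) ^ 2 + 2 * μ1 * (1 - δ2) * c1 ^ 2 * c2 := by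
    rw [hs, Real.sq_sqrt]; positivity
  have ha : 0 < (1 - δ2) * c1 ^ 2 * c2 := by positivity
  have haτ1 : τ1 * ((1 - δ2) * c1 ^ 2 * c2) = -(c1 * (μ1 + c1)) + s := by
    rw [hτ1]; field_simp
  have hau : ((1 - δ2) * c1 ^ 2 * c2) * (τ1 - τ) = s - c1 * (μ1 + c1) - (1 - δ2) * c1 ^ 2 * c2 * τ := by
    linear_combination haτ1
  have key : (s - c1 * (μ1 + c1) - (1 - δ2) * c1 ^ 2 * c2 * τ) *
      (s + c1 * (μ1 + c1) + (1 - δ2) * c1 ^ 2 * c2 * τ) ≥ 0 := by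
    apply mul_nonneg
    · rw [← hau]; exact mul_nonneg ha.le (sub_nonneg.2 hττ1)
    · positivity
  have hQ : -((1 - δ2) * c1 ^ 2 * c2 / 2) * τ ^ 2 - c1 * (μ1 + c1) * τ + μ1 ≥ 0 := by
    nlinarith [key, hssq, ha]
  constructor
  · nlinarith [mul_nonneg (mul_nonneg hh3j (sq_nonneg τ)) (by positivity : (0:ℝ) ≤ (1 - δ2) * c1 * c2 ^ 2),
      mul_nonneg (mul_nonneg hh3j hτ0) (by positivity : (0:ℝ) ≤ (μ1 + c1 + (1 - δ2) * c2) * c2),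
      mul_nonneg hh3j (by positivity : (0:ℝ) ≤ δ2 * c2)]
  · exact mul_nonneg hh2j hQ
end

section
/- Let c1, c2 > 0, δ2 ∈ (0,1), cbar2 = (1 + δ2)·c2, and let h2j ≥ 0, h3j ≥ 0 be real numbers. Define τ2 = (-(c1 + cbar2) + √((c1 + cbar2)² + 2·δ2·c1·cbar2)) / (c1·cbar2). Then for every τ ∈ [0, τ2], (c1·cbar2·(c1·h2j - c2·h3j)/2)·τ² + (c1²·h2j - (c1 + cbar2)·c2·h3j)·τ + δ2·c2·h3j ≥ c2·h3j·(-(c1·cbar2/2)·τ² - (c1 + cbar2)·τ + δ2) ≥ 0. -/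
/-!
The two sides differ by `c1² h2j τ (cbar2 τ / 2 + 1) ≥ 0`. For the lower bound, with
`a = c1 cbar2`, `b = c1 + cbar2` and `s = √(b² + 2 a δ2)`, the quadratic factors as
`2a (δ2 - bτ - (a/2)τ²) = (s - b - aτ)(s + b + aτ)`; the first factor is nonnegative up to the
root `τ2 = (s - b)/a` and the second for `τ ≥ 0`, since `s ≥ |b|`.
-/

open Set

theorem neg_half_mul_sq_sub_mul_add_nonneg_of_mem_Icc {a b c τ : ℝ} (ha : 0 < a) (hc : 0 ≤ c)
    (hτ : τ ∈ Icc 0 ((-b + √(b ^ 2 + 2 * a * c)) / a)) :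
    0 ≤ -(a / 2) * τ ^ 2 - b * τ + c := by
  set s := √(b ^ 2 + 2 * a * c)
  have hs : s ^ 2 = b ^ 2 + 2 * a * c := Real.sq_sqrt (by positivity)
  have hbs : |b| ≤ s := Real.abs_le_sqrt (by nlinarith)
  have hleft : 0 ≤ s - b - a * τ := by
    have := (le_div_iff₀ ha).mp hτ.2
    linarith
  have hright : 0 ≤ s + b + a * τ := by
    nlinarith [neg_abs_le b, hτ.1]
  have hfactor : 2 * a * (-(a / 2) * τ ^ 2 - b * τ + c) = (s - b - a * τ) * (s + b + a * τ) := by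
    linear_combination -hs
  have hprod := mul_nonneg hleft hright
  rw [← hfactor] at hprod
  exact (mul_nonneg_iff_of_pos_left (by positivity)).mp hprod

/-- Uniform lower bound on the lower-margin quadratic: for `τ ∈ [0, τ2]` the explicit
quadratic expression for `m2(t_j + τ)` is bounded below by `c2 h3j` times a quadratic in `τ`
whose largest root is `τ2`, hence is nonnegative. -/
theorem stmt_6 (c1 c2 δ2 cbar2 h2j h3j : ℝ) (hc1 : 0 < c1) (hc2 : 0 < c2)
    (hδ2 : δ2 ∈ Set.Ioo (0:ℝ) 1) (hcbar2 : cbar2 = (1 + δ2) * c2)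
    (hh2j : 0 ≤ h2j) (hh3j : 0 ≤ h3j)
    (τ2 : ℝ)
    (hτ2 : τ2 = (-(c1 + cbar2) +
        Real.sqrt ((c1 + cbar2) ^ 2 + 2 * δ2 * c1 * cbar2)) / (c1 * cbar2)) :
    ∀ τ ∈ Set.Icc (0:ℝ) τ2,
      (c1 * cbar2 * (c1 * h2j - c2 * h3j) / 2) * τ ^ 2
          + (c1 ^ 2 * h2j - (c1 + cbar2) * c2 * h3j) * τ
          + δ2 * c2 * h3j
        ≥ c2 * h3j * (-(c1 * cbar2 / 2) * τ ^ 2 - (c1 + cbar2) * τ + δ2)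
      ∧ c2 * h3j * (-(c1 * cbar2 / 2) * τ ^ 2 - (c1 + cbar2) * τ + δ2) ≥ 0 := by
  intro τ hτ
  have hcbar : 0 < cbar2 := by rw [hcbar2]; nlinarith [hδ2.1]
  have hq : 0 ≤ -(c1 * cbar2 / 2) * τ ^ 2 - (c1 + cbar2) * τ + δ2 := by
    refine neg_half_mul_sq_sub_mul_add_nonneg_of_mem_Icc (mul_pos hc1 hcbar) hδ2.1.le ?_
    convert hτ using 5
    rw [hτ2]
    ring_nf
  have hgap : 0 ≤ c1 ^ 2 * h2j * τ * (cbar2 * τ / 2 + 1) := by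
    have := hτ.1
    positivity
  exact ⟨by linear_combination hgap, mul_nonneg (mul_nonneg hc2.le hh3j) hq⟩
end

section
/- Let α, β, k > 0, T_m ∈ ℝ, 0 < s0 ≤ s_r. Let s : [0, ∞) → ℝ be nondecreasing with s(0) = s0, and let T : ℝ × [0, ∞) → ℝ satisfy T(x,t) ≥ T_m for all t ≥ 0 and all x ∈ (0, s(t)), with x ↦ T(x,t) integrable on (0, s(t)). If for all t ≥ 0 the barrier value h1(t) := -((k/α)·∫₀^{s(t)} (T(x,t) - T_m) dx + (k/β)·(s(t) - s_r)) is nonnegative, then 0 < s0 ≤ s(t) ≤ s_r for all t ≥ 0. -/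
open MeasureTheory

/-! The liquid temperature exceeds `T_m`, so the energy integral in `h1` is nonnegative; then
`h1 ≥ 0` forces the term `(k / β) (s(t) - s_r)` to be nonpositive, i.e. `s(t) ≤ s_r`. The lower
bound `s0 ≤ s(t)` is monotonicity of the interface. -/

theorem intervalIntegral_nonneg_of_forall_Ioo {f : ℝ → ℝ} {a b : ℝ} (hab : a ≤ b)
    (hf : ∀ x ∈ Set.Ioo a b, 0 ≤ f x) : 0 ≤ ∫ x in a..b, f x := by
  rw [intervalIntegral.integral_of_le hab, integral_Ioc_eq_integral_Ioo]
  exact setIntegral_nonneg measurableSet_Ioo hf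

theorem le_of_neg_add_mul_sub_nonneg {a b I x r : ℝ} (ha : 0 ≤ a) (hb : 0 < b) (hI : 0 ≤ I)
    (h : 0 ≤ -(a * I + b * (x - r))) : x ≤ r := by
  have : b * (x - r) ≤ 0 := by nlinarith [mul_nonneg ha hI]
  nlinarith

theorem stmt_9_general (α β k T_m s0 s_r : ℝ) (hα : 0 < α) (hβ : 0 < β) (hk : 0 < k)
    (hs0 : 0 < s0)
    (s : ℝ → ℝ) (hs_mono : MonotoneOn s (Set.Ici 0)) (hs_init : s 0 = s0)
    (T : ℝ → ℝ → ℝ)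
    (hT : ∀ t ≥ (0:ℝ), ∀ x ∈ Set.Ioo (0:ℝ) (s t), T_m ≤ T x t)
    (hh1 : ∀ t ≥ (0:ℝ),
      0 ≤ -((k / α) * (∫ x in (0:ℝ)..(s t), (T x t - T_m)) + (k / β) * (s t - s_r))) :
    ∀ t ≥ (0:ℝ), 0 < s0 ∧ s0 ≤ s t ∧ s t ≤ s_r := by
  intro t ht
  have hs0t : s0 ≤ s t := hs_init ▸ hs_mono Set.self_mem_Ici ht ht
  have henergy : 0 ≤ ∫ x in (0:ℝ)..(s t), (T x t - T_m) :=
    intervalIntegral_nonneg_of_forall_Ioo (hs0.le.trans hs0t) fun x hx =>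
      sub_nonneg.2 (hT t ht x hx)
  exact ⟨hs0, hs0t,
    le_of_neg_add_mul_sub_nonneg (by positivity) (by positivity) henergy (hh1 t ht)⟩

/-- Interface-constraint part of Lemma 2: nonnegativity of the energy-type barrier `h1`,
together with `T ≥ T_m` on the liquid domain and monotonicity of the interface,
confines the interface between `s0` and the setpoint `s_r`. -/
theorem stmt_9 (α β k T_m s0 s_r : ℝ) (hα : 0 < α) (hβ : 0 < β) (hk : 0 < k)
    (hs0 : 0 < s0) (hs0r : s0 ≤ s_r)
    (s : ℝ → ℝ) (hs_mono : MonotoneOn s (Set.Ici 0)) (hs_init : s 0 = s0)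
    (T : ℝ → ℝ → ℝ)
    (hT : ∀ t ≥ (0:ℝ), ∀ x ∈ Set.Ioo (0:ℝ) (s t), T_m ≤ T x t)
    (hT_int : ∀ t ≥ (0:ℝ), IntervalIntegrable (fun x => T x t) volume 0 (s t))
    (hh1 : ∀ t ≥ (0:ℝ),
      0 ≤ -((k / α) * (∫ x in (0:ℝ)..(s t), (T x t - T_m)) + (k / β) * (s t - s_r))) :
    ∀ t ≥ (0:ℝ), 0 < s0 ∧ s0 ≤ s t ∧ s t ≤ s_r :=
  stmt_9_general α β k T_m s0 s_r hα hβ hk hs0 s hs_mono hs_init T hT hh1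
end

section
/- Let α > 0, T_m ∈ ℝ, t_f > 0, and let s : [0, t_f] → ℝ be continuous with s(t) > 0 for all t. Let Q = {(x,t) : 0 < x < s(t), 0 < t ≤ t_f} and Q̄ = {(x,t) : 0 ≤ x ≤ s(t), 0 ≤ t ≤ t_f}. Let T : Q̄ → ℝ be continuous, with ∂T/∂t and ∂²T/∂x² existing on Q and satisfying ∂T/∂t = α·∂²T/∂x² on Q, with ∂T/∂x (0,t) existing and ∂T/∂x (0,t) ≤ 0 for all t ∈ (0, t_f], T(s(t), t) = T_m for all t ∈ [0, t_f], and T(x, 0) ≥ T_m for all x ∈ [0, s(0)]. Then T(x,t) ≥ T_m for all (x,t) ∈ Q̄. -/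
/-- Maximum principle for the one-phase Stefan problem (Lemma 1): with nonpositive
spatial derivative at `x = 0` (nonnegative inflow heat flux), melting-temperature
Dirichlet condition at the moving interface, and initial temperature at or above `T_m`,
the liquid temperature remains at or above `T_m` on the closed space-time domain. -/
theorem stmt_11 (α T_m t_f : ℝ) (hα : 0 < α) (htf : 0 < t_f)
    (s : ℝ → ℝ) (hs_cont : ContinuousOn s (Set.Icc 0 t_f))
    (hs_pos : ∀ t ∈ Set.Icc (0:ℝ) t_f, 0 < s t)
    (T Tt Tx Txx : ℝ → ℝ → ℝ) (Tx0 : ℝ → ℝ)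
    (hT_cont : ContinuousOn (fun p : ℝ × ℝ => T p.1 p.2)
      {p : ℝ × ℝ | 0 ≤ p.1 ∧ p.1 ≤ s p.2 ∧ 0 ≤ p.2 ∧ p.2 ≤ t_f})
    (hTt : ∀ x t : ℝ, 0 < x → x < s t → 0 < t → t ≤ t_f →
      HasDerivWithinAt (fun u => T x u) (Tt x t) (Set.Iic t_f) t)
    (hTx : ∀ x t : ℝ, 0 < x → x < s t → 0 < t → t ≤ t_f →
      HasDerivAt (fun y => T y t) (Tx x t) x)
    (hTxx : ∀ x t : ℝ, 0 < x → x < s t → 0 < t → t ≤ t_f →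
      HasDerivAt (fun y => Tx y t) (Txx x t) x)
    (hheat : ∀ x t : ℝ, 0 < x → x < s t → 0 < t → t ≤ t_f → Tt x t = α * Txx x t)
    (hflux : ∀ t : ℝ, 0 < t → t ≤ t_f →
      HasDerivWithinAt (fun x => T x t) (Tx0 t) (Set.Ici 0) 0 ∧ Tx0 t ≤ 0)
    (hdir : ∀ t ∈ Set.Icc (0:ℝ) t_f, T (s t) t = T_m)
    (hinit : ∀ x ∈ Set.Icc (0:ℝ) (s 0), T_m ≤ T x 0) :
    ∀ x t : ℝ, 0 ≤ x → x ≤ s t → 0 ≤ t → t ≤ t_f → T_m ≤ T x t := by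
  intro x₀ t₀ hx₀ hx₀s ht₀ ht₀f
  by_contra hcon
  push_neg at hcon
  -- clamped version of s, continuous on all of ℝ
  set s' : ℝ → ℝ := fun t => s (min (max t 0) t_f) with hs'def
  have hclamp : ∀ t : ℝ, min (max t 0) t_f ∈ Set.Icc (0:ℝ) t_f := by
    intro t
    exact ⟨le_min (le_max_right t 0) htf.le, min_le_right _ _⟩
  have hs'cont : Continuous s' := by
    apply hs_cont.comp_continuous
    · exact (continuous_id.max continuous_const).min continuous_const
    · exact hclamp
  have hs'eq : ∀ t ∈ Set.Icc (0:ℝ) t_f, s' t = s t := by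
    intro t ht
    simp only [hs'def, max_eq_left ht.1, min_eq_left ht.2]
  -- bound on s
  obtain ⟨tM, htM, hMmax⟩ := isCompact_Icc.exists_isMaxOn (⟨0, le_refl _, htf.le⟩ :
    (Set.Icc (0:ℝ) t_f).Nonempty) hs_cont
  obtain ⟨M, hMdef⟩ : ∃ M : ℝ, M = s tM := ⟨_, rfl⟩
  have hMpos : 0 < M := hMdef ▸ hs_pos tM htM
  have hMle : ∀ t ∈ Set.Icc (0:ℝ) t_f, s t ≤ M := fun t ht => hMdef ▸ hMmax ht
  have hs'le : ∀ t : ℝ, s' t ≤ M := fun t => hMle _ (hclamp t)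
  -- the compact domain
  set K : Set (ℝ × ℝ) := {p : ℝ × ℝ | 0 ≤ p.1 ∧ p.1 ≤ s' p.2 ∧ 0 ≤ p.2 ∧ p.2 ≤ t_f}
    with hKdef
  have hKclosed : IsClosed K := by
    have h1 : IsClosed {p : ℝ × ℝ | 0 ≤ p.1} := isClosed_le continuous_const continuous_fst
    have h2 : IsClosed {p : ℝ × ℝ | p.1 ≤ s' p.2} :=
      isClosed_le continuous_fst (hs'cont.comp continuous_snd)
    have h3 : IsClosed {p : ℝ × ℝ | 0 ≤ p.2} := isClosed_le continuous_const continuous_snd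
    have h4 : IsClosed {p : ℝ × ℝ | p.2 ≤ t_f} := isClosed_le continuous_snd continuous_const
    exact h1.inter (h2.inter (h3.inter h4))
  have hKsub : K ⊆ Set.Icc (0:ℝ) M ×ˢ Set.Icc (0:ℝ) t_f := by
    rintro ⟨x, t⟩ ⟨h1, h2, h3, h4⟩
    exact ⟨⟨h1, h2.trans (hs'le t)⟩, h3, h4⟩
  have hKcomp : IsCompact K :=
    (isCompact_Icc.prod isCompact_Icc).of_isClosed_subset hKclosed hKsub
  have hKS : K ⊆ {p : ℝ × ℝ | 0 ≤ p.1 ∧ p.1 ≤ s p.2 ∧ 0 ≤ p.2 ∧ p.2 ≤ t_f} := by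
    rintro ⟨x, t⟩ ⟨h1, h2, h3, h4⟩
    exact ⟨h1, by rwa [hs'eq t ⟨h3, h4⟩] at h2, h3, h4⟩
  have hmemK : ∀ x t : ℝ, 0 ≤ x → x ≤ s t → 0 ≤ t → t ≤ t_f → (x, t) ∈ K := by
    intro x t h1 h2 h3 h4
    exact ⟨h1, by rwa [hs'eq t ⟨h3, h4⟩], h3, h4⟩
  -- the perturbation constants (opaque, with defining equations)
  obtain ⟨m, hmdef⟩ : ∃ m : ℝ, m = T x₀ t₀ - T_m := ⟨_, rfl⟩
  have hm : m < 0 := by rw [hmdef]; linarith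
  obtain ⟨ε, hεdef⟩ : ∃ ε : ℝ, ε = -m / (4 * t_f) := ⟨_, rfl⟩
  obtain ⟨δ, hδdef⟩ : ∃ δ : ℝ, δ = -m / (4 * M) := ⟨_, rfl⟩
  have hε : 0 < ε := by rw [hεdef]; apply div_pos (by linarith) (by linarith)
  have hδ : 0 < δ := by rw [hδdef]; apply div_pos (by linarith) (by linarith)
  have hεtf : ε * t_f = -m / 4 := by
    rw [hεdef]; field_simp
  have hδM : δ * M = -m / 4 := by
    rw [hδdef]; field_simp
  -- the perturbed function
  obtain ⟨u, hueval⟩ : ∃ u : ℝ × ℝ → ℝ, ∀ q : ℝ × ℝ, u q = T q.1 q.2 + ε * q.2 - δ * q.1 :=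
    ⟨_, fun q => rfl⟩
  have hu_cont : ContinuousOn u K := by
    have : u = fun q : ℝ × ℝ => T q.1 q.2 + ε * q.2 - δ * q.1 := funext hueval
    rw [this]
    apply ContinuousOn.sub
    · exact (hT_cont.mono hKS).add
        ((continuous_const.mul continuous_snd).continuousOn)
    · exact (continuous_const.mul continuous_fst).continuousOn
  -- minimum point
  have hK0 : (x₀, t₀) ∈ K := hmemK _ _ hx₀ hx₀s ht₀ ht₀f
  obtain ⟨p, hpK, hpmin'⟩ := hKcomp.exists_isMinOn ⟨(x₀, t₀), hK0⟩ hu_cont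
  have hpmin : ∀ q ∈ K, u p ≤ u q := fun q hq => hpmin' hq
  obtain ⟨hpx0, hpxs', hpt0, hptf⟩ := hpK
  have hptIcc : p.2 ∈ Set.Icc (0:ℝ) t_f := ⟨hpt0, hptf⟩
  have hpxs : p.1 ≤ s p.2 := by rwa [hs'eq p.2 hptIcc] at hpxs'
  have hpxM : p.1 ≤ M := hpxs.trans (hMle _ hptIcc)
  -- upper bound on the minimum value
  have hub : u p ≤ T_m + 3 / 4 * m := by
    have h1 : u p ≤ u (x₀, t₀) := hpmin _ hK0
    have h2 : u (x₀, t₀) = T x₀ t₀ + ε * t₀ - δ * x₀ := hueval _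
    have h2' : u p = T p.1 p.2 + ε * p.2 - δ * p.1 := hueval _
    have h3 : ε * t₀ ≤ ε * t_f := mul_le_mul_of_nonneg_left ht₀f hε.le
    have h4 : 0 ≤ δ * x₀ := mul_nonneg hδ.le hx₀
    linarith
  -- the min is not at t = 0
  have hpt_pos : 0 < p.2 := by
    rcases hpt0.lt_or_eq with h | h
    · exact h
    · exfalso
      have hp2 : p.2 = 0 := h.symm
      have hx0 : p.1 ∈ Set.Icc (0:ℝ) (s 0) := ⟨hpx0, by rwa [hp2] at hpxs⟩
      have h1 : T_m ≤ T p.1 0 := hinit _ hx0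
      have h2 : u p = T p.1 0 + ε * 0 - δ * p.1 := by rw [hueval p, hp2]
      have hub' : u p ≤ T_m + 3 / 4 * m := hub
      have h3 : δ * p.1 ≤ δ * M := mul_le_mul_of_nonneg_left hpxM hδ.le
      have h4 : ε * 0 = 0 := mul_zero ε
      linarith
  -- the min is not on the moving boundary
  have hpx_lt : p.1 < s p.2 := by
    rcases hpxs.lt_or_eq with h | h
    · exact h
    · exfalso
      have h1 : T p.1 p.2 = T_m := by rw [h]; exact hdir p.2 hptIcc
      have h2 : u p = T p.1 p.2 + ε * p.2 - δ * p.1 := hueval p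
      have h3 : δ * p.1 ≤ δ * M := mul_le_mul_of_nonneg_left hpxM hδ.le
      have h4 : 0 ≤ ε * p.2 := mul_nonneg hε.le hpt0
      linarith
  -- spatial slice function
  obtain ⟨g, hgeval⟩ : ∃ g : ℝ → ℝ, ∀ y : ℝ, g y = T y p.2 - δ * y := ⟨_, fun y => rfl⟩
  have hgmin : ∀ y ∈ Set.Icc (0:ℝ) (s p.2), g p.1 ≤ g y := by
    intro y hy
    have h1 := hpmin (y, p.2) (hmemK y p.2 hy.1 hy.2 hpt0 hptf)
    have h2 : u (y, p.2) = T y p.2 + ε * p.2 - δ * y := hueval _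
    have h3 : u p = T p.1 p.2 + ε * p.2 - δ * p.1 := hueval _
    rw [hgeval, hgeval]
    linarith
  rcases hpx0.lt_or_eq with hx0pos | hx0eq
  · -- interior minimum: 0 < p.1 < s p.2
    have hgderiv : ∀ y : ℝ, 0 < y → y < s p.2 → HasDerivAt g (Tx y p.2 - δ) y := by
      intro y h1 h2
      have hd : HasDerivAt (fun y : ℝ => δ * y) δ y := by
        simpa using (hasDerivAt_id y).const_mul δ
      have := (hTx y p.2 h1 h2 hpt_pos hptf).sub hd
      have hfg : g = fun y => T y p.2 - δ * y := funext hgeval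
      rw [hfg]
      exact this
    have hlocmin : IsLocalMin g p.1 :=
      IsMinOn.isLocalMin (isMinOn_iff.mpr hgmin) (Icc_mem_nhds hx0pos hpx_lt)
    have hTxδ : Tx p.1 p.2 - δ = 0 :=
      hlocmin.hasDerivAt_eq_zero (hgderiv p.1 hx0pos hpx_lt)
    -- second spatial derivative is nonnegative at the min
    have hTxx0 : 0 ≤ Txx p.1 p.2 := by
      by_contra hneg
      push_neg at hneg
      have hslope := (hasDerivAt_iff_tendsto_slope.mp
        (hTxx p.1 p.2 hx0pos hpx_lt hpt_pos hptf)).eventually_lt_const hneg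
      rw [eventually_nhdsWithin_iff, Metric.eventually_nhds_iff] at hslope
      obtain ⟨η, hη, hsl⟩ := hslope
      obtain ⟨b, hbdef⟩ : ∃ b : ℝ, b = min (p.1 + η / 2) ((p.1 + s p.2) / 2) := ⟨_, rfl⟩
      have hb1 : p.1 < b := by
        rw [hbdef]; exact lt_min (by linarith) (by linarith)
      have hb2 : b < s p.2 := by
        rw [hbdef]; exact (min_le_right _ _).trans_lt (by linarith)
      have hb3 : b - p.1 < η := by
        have h := hbdef ▸ min_le_left (p.1 + η / 2) ((p.1 + s p.2) / 2)
        linarith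
      have hanti : StrictAntiOn g (Set.Icc p.1 b) := by
        apply strictAntiOn_of_deriv_neg (convex_Icc _ _)
        · intro y hy
          exact (hgderiv y (hx0pos.trans_le hy.1)
            (lt_of_le_of_lt hy.2 hb2)).continuousAt.continuousWithinAt
        · intro y hy
          rw [interior_Icc] at hy
          obtain ⟨hya, hyb⟩ := hy
          rw [(hgderiv y (hx0pos.trans hya) (hyb.trans hb2)).deriv]
          have hdist : dist y p.1 < η := by
            rw [Real.dist_eq, abs_of_pos (by linarith : (0:ℝ) < y - p.1)]
            linarith
          have hne : y ∈ ({p.1}ᶜ : Set ℝ) := by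
            simp only [Set.mem_compl_iff, Set.mem_singleton_iff]
            exact ne_of_gt hya
          have hs2 := hsl hdist hne
          rw [slope_def_field] at hs2
          have hy1 : 0 < y - p.1 := by linarith
          have hnum : Tx y p.2 - Tx p.1 p.2 < 0 := by
            by_contra hge
            push_neg at hge
            exact absurd hs2 (not_lt.mpr (div_nonneg hge hy1.le))
          linarith
      have hgb : g b < g p.1 :=
        hanti (Set.left_mem_Icc.mpr hb1.le) ⟨hb1.le, le_refl _⟩ hb1
      have := hgmin b ⟨(hx0pos.trans hb1).le, hb2.le⟩
      linarith
    -- time derivative at the min is ≤ -ε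
    have hTtle : Tt p.1 p.2 ≤ -ε := by
      have hTtp := hasDerivWithinAt_iff_tendsto_slope.mp
        (hTt p.1 p.2 hx0pos hpx_lt hpt_pos hptf)
      have hmono : nhdsWithin p.2 (Set.Iio p.2) ≤ nhdsWithin p.2 (Set.Iic t_f \ {p.2}) := by
        apply nhdsWithin_mono
        intro τ hτ
        exact ⟨(le_of_lt hτ).trans hptf, ne_of_lt hτ⟩
      apply le_of_tendsto (hTtp.mono_left hmono)
      have hev1 : ∀ᶠ τ in nhdsWithin p.2 (Set.Iio p.2), 0 < τ :=
        ((eventually_gt_nhds hpt_pos).filter_mono nhdsWithin_le_nhds)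
      have hev2 : ∀ᶠ τ in nhdsWithin p.2 (Set.Iio p.2), p.1 < s' τ := by
        have hx : p.1 < s' p.2 := by rwa [hs'eq p.2 hptIcc]
        exact ((hs'cont.continuousAt.eventually_const_lt hx).filter_mono nhdsWithin_le_nhds)
      have hev3 : ∀ᶠ τ in nhdsWithin p.2 (Set.Iio p.2), τ ∈ Set.Iio p.2 :=
        self_mem_nhdsWithin
      filter_upwards [hev1, hev2, hev3] with τ h1 h2 h3
      have hτlt : τ < p.2 := h3
      have hτf : τ ≤ t_f := (hτlt.trans_le hptf).le
      have hmem : (p.1, τ) ∈ K := ⟨hpx0, h2.le, h1.le, hτf⟩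
      have hmin := hpmin _ hmem
      have he1 : u (p.1, τ) = T p.1 τ + ε * τ - δ * p.1 := hueval _
      have he2 : u p = T p.1 p.2 + ε * p.2 - δ * p.1 := hueval _
      rw [he1, he2] at hmin
      simp only [slope_def_field]
      rw [div_le_iff_of_neg (by linarith : τ - p.2 < 0)]
      nlinarith
    have hheatp := hheat p.1 p.2 hx0pos hpx_lt hpt_pos hptf
    have := mul_nonneg hα.le hTxx0
    linarith
  · -- boundary minimum at x = 0
    obtain ⟨hT0deriv, hT0le⟩ := hflux p.2 hpt_pos hptf
    have hslope := hasDerivWithinAt_iff_tendsto_slope.mp hT0deriv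
    rw [Set.Ici_sdiff_left] at hslope
    have hδle : δ ≤ Tx0 p.2 := by
      apply ge_of_tendsto hslope
      have hev1 : ∀ᶠ y in nhdsWithin (0:ℝ) (Set.Ioi 0), y < s p.2 :=
        ((gt_mem_nhds (hs_pos p.2 hptIcc)).filter_mono nhdsWithin_le_nhds)
      have hev2 : ∀ᶠ y in nhdsWithin (0:ℝ) (Set.Ioi 0), y ∈ Set.Ioi (0:ℝ) :=
        self_mem_nhdsWithin
      filter_upwards [hev1, hev2] with y h1 h2
      have hy : (0:ℝ) < y := h2
      have hgy := hgmin y ⟨hy.le, h1.le⟩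
      rw [← hx0eq, hgeval, hgeval] at hgy
      simp only [slope_def_field]
      rw [le_div_iff₀ (by linarith : (0:ℝ) < y - 0)]
      nlinarith
    linarith
end

section
/- Let c1, c2, q > 0, δ2 ∈ (0,1), μ1 > 0, and fix t ≥ 0. Let h1, h3, Ũ : ℝ → ℝ with h1, h3 differentiable at t, h1'(t) = -c1·h1(t) + h3(t), h3'(t) = -c2·h3(t) + Ũ(t), h3(t) ≥ 0, and Ũ(t) ≤ μ1·h2(t) + δ2·c2·h3(t) where h2(t) := -h3(t) + c1·h1(t). Define V_h(u) = (1/2)·h3(u)² + (q/2)·h1(u)². Then V_h is differentiable at t and V_h'(t) ≤ -(c2·(1-δ2) + μ1/2 - q/(2·c1))·h3(t)² - (c1/2)·(q - c1·μ1)·h1(t)². -/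
/-- Decay of the barrier Lyapunov function `V_h = (1/2)h3² + (q/2)h1²` under the
event-triggering stability condition on the input deviation `Ũ`, where
`h2 = -h3 + c1 h1`. -/
theorem stmt_13 (c1 c2 q δ2 μ1 t : ℝ) (hc1 : 0 < c1) (hc2 : 0 < c2) (hq : 0 < q)
    (hδ2 : δ2 ∈ Set.Ioo (0:ℝ) 1) (hμ1 : 0 < μ1) (ht : 0 ≤ t)
    (h1 h3 U : ℝ → ℝ)
    (hd1 : HasDerivAt h1 (-c1 * h1 t + h3 t) t)
    (hd3 : HasDerivAt h3 (-c2 * h3 t + U t) t)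
    (hh3 : 0 ≤ h3 t)
    (hU : U t ≤ μ1 * (-h3 t + c1 * h1 t) + δ2 * c2 * h3 t) :
    DifferentiableAt ℝ (fun u => (1 / 2) * (h3 u) ^ 2 + (q / 2) * (h1 u) ^ 2) t ∧
      deriv (fun u => (1 / 2) * (h3 u) ^ 2 + (q / 2) * (h1 u) ^ 2) t ≤
        -(c2 * (1 - δ2) + μ1 / 2 - q / (2 * c1)) * (h3 t) ^ 2
          - (c1 / 2) * (q - c1 * μ1) * (h1 t) ^ 2 := by
  have hV : HasDerivAt (fun u => (1 / 2) * (h3 u) ^ 2 + (q / 2) * (h1 u) ^ 2)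
      ((1 / 2) * (2 * h3 t ^ 1 * (-c2 * h3 t + U t))
        + (q / 2) * (2 * h1 t ^ 1 * (-c1 * h1 t + h3 t))) t :=
    ((hd3.pow 2).const_mul _).add ((hd1.pow 2).const_mul _)
  refine ⟨hV.differentiableAt, ?_⟩
  rw [hV.deriv]
  have hUb : h3 t * U t ≤ h3 t * (μ1 * (-h3 t + c1 * h1 t) + δ2 * c2 * h3 t) :=
    mul_le_mul_of_nonneg_left hU hh3
  obtain ⟨hδa, hδb⟩ := hδ2
  have hc1' : c1 ≠ 0 := ne_of_gt hc1
  have hgoal : q / (2 * c1) = (q / c1) / 2 := by rw [div_div, mul_comm]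
  rw [hgoal]
  set r := q / c1 with hrdef
  have hrc : r * c1 = q := div_mul_cancel₀ q hc1'
  have hr0 : 0 < r := div_pos hq hc1
  nlinarith [mul_nonneg (le_of_lt hμ1) (sq_nonneg (c1 * h1 t - h3 t)),
    mul_nonneg (le_of_lt hr0) (sq_nonneg (c1 * h1 t - h3 t)), hUb, hrc]
end
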